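/- Any two cluster decompositions of a given multiset z admit a common coarsening: there exists a cluster decomposition z = Σ w_k such that each x_i and each y_j (clusters of the two given decompositions) is contained in some w_k. -/

import Mathlib

/-- A clustering rule: sequences of positive reals `0 < r 1 < r 2 < ...` and
`0 = d 1 < d 2 < ...` with `r k > d k + r (k-1)` and `d k > 6 * r (k-1)` for `k ≥ 2`. -/
def ClusteringRule (r d : ℕ → ℝ) : Prop :=
  0 < r 1 ∧ d 1 = 0 ∧
  (∀ k, 1 ≤ k → r k < r (k + 1)) ∧
  (∀ k, 1 ≤ k → d k < d (k + 1)) ∧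
  (∀ k, 2 ≤ k → d k + r (k - 1) < r k) ∧
  (∀ k, 2 ≤ k → 6 * r (k - 1) < d k)

/-!
Clusters of two cluster decompositions of `z` are nested or disjoint: a confined piece meeting a
cluster `y` at least as large as itself cannot also meet a cluster separated from `y`, as this
would bring the two centres too close. Hence the clusters of either decomposition that are maximal
for inclusion are disjoint and add up to `z`. They are confined but need not be separated.
Merging a non-separated pair of confined pieces around the centre of one of them gives a confined
piece, because `d n + r (n - 1) < r n`; merging until all pairs are separated yields the common
coarsening.
-/

theorem Multiset.le_of_le_add_of_disjoint {α : Type*} {x a b : Multiset α} (h : x ≤ a + b)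
    (hx : Disjoint x b) : x ≤ a := by
  classical
  refine Multiset.le_iff_count.2 fun q => ?_
  by_cases hq : q ∈ x
  · simpa [Multiset.count_eq_zero.2 (Multiset.disjoint_left.1 hx hq)] using
      Multiset.le_iff_count.1 h q
  · simp [Multiset.count_eq_zero.2 hq]

theorem Multiset.finsetSum_eq_sup {ι α : Type*} [DecidableEq α] {s : Finset ι}
    {f : ι → Multiset α} (hf : (s : Set ι).PairwiseDisjoint f) : ∑ i ∈ s, f i = s.sup f := by
  classical
  induction s using Finset.induction_on with
  | empty => rfl
  | insert a s ha ih =>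
    have hdisj : Disjoint (f a) (s.sup f) := Finset.disjoint_sup_right.2 fun b hb =>
      hf (by simp) (by simp [hb]) (ne_of_mem_of_not_mem hb ha).symm
    rw [Finset.sum_insert ha, Finset.sup_insert, ih (hf.subset (by simp)),
      Multiset.add_eq_union_iff_disjoint.2 hdisj, Multiset.sup_eq_union]

section MergePieces

variable {α ι : Type*} [DecidableEq ι] {W : ι → Multiset α} {i j : ι}

def mergePieces (W : ι → Multiset α) (i j : ι) : ι → Multiset α :=
  Function.update (Function.update W i (W i + W j)) j 0

theorem mergePieces_left (hij : i ≠ j) : mergePieces W i j i = W i + W j := by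
  simp [mergePieces, hij]

theorem mergePieces_right : mergePieces W i j j = 0 := by
  simp [mergePieces]

theorem mergePieces_of_ne {k : ι} (hki : k ≠ i) (hkj : k ≠ j) : mergePieces W i j k = W k := by
  simp [mergePieces, hki, hkj]

theorem exists_le_mergePieces (hij : i ≠ j) (k : ι) : ∃ k', W k ≤ mergePieces W i j k' := by
  by_cases hkj : k = j
  · exact ⟨i, by rw [mergePieces_left hij, hkj]; exact le_add_self⟩
  by_cases hki : k = i
  · exact ⟨i, by rw [mergePieces_left hij, hki]; exact le_self_add⟩
  · exact ⟨k, (mergePieces_of_ne hki hkj).ge⟩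

variable [Fintype ι]

theorem sum_mergePieces (hij : i ≠ j) : ∑ k, mergePieces W i j k = ∑ k, W k := by
  have hi : i ∈ Finset.univ.erase j := Finset.mem_erase.2 ⟨hij, Finset.mem_univ i⟩
  rw [mergePieces, Finset.sum_update_of_mem (Finset.mem_univ j),
    Finset.sdiff_singleton_eq_erase, Finset.sum_update_of_mem hi, Finset.sdiff_singleton_eq_erase,
    ← Finset.add_sum_erase _ W (Finset.mem_univ j), ← Finset.add_sum_erase _ W hi]
  abel

theorem card_mergePieces_ne_zero_lt [DecidableEq α] (hi : W i ≠ 0) (hj : W j ≠ 0) :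
    (Finset.univ.filter fun k => mergePieces W i j k ≠ 0).card <
      (Finset.univ.filter fun k => W k ≠ 0).card := by
  refine Finset.card_lt_card <| (Finset.ssubset_iff_of_subset fun k => ?_).2
    ⟨j, by simp [hj], by simp [mergePieces_right]⟩
  simp only [Finset.mem_filter, Finset.mem_univ, true_and]
  intro hk
  by_cases hkj : k = j
  · exact absurd (hkj ▸ mergePieces_right) hk
  by_cases hki : k = i
  · exact hki ▸ hi
  · rwa [mergePieces_of_ne hki hkj] at hk

end MergePieces

section MaximalClusters

variable {α ι κ : Type*}

open Classical in
/-- `0` marks a dropped cluster; a cluster occurring in both decompositions is kept on the left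
only. -/
noncomputable def maximalClusters (X : ι → Multiset α) (Y : κ → Multiset α) :
    ι ⊕ κ → Multiset α :=
  Sum.elim (fun i => if ∃ j, X i < Y j then 0 else X i)
    (fun j => if ∃ i, Y j ≤ X i then 0 else Y j)

theorem maximalClusters_eq_zero_or (X : ι → Multiset α) (Y : κ → Multiset α) (k : ι ⊕ κ) :
    maximalClusters X Y k = 0 ∨ maximalClusters X Y k = Sum.elim X Y k := by
  rcases k with i | j <;> simp only [maximalClusters, Sum.elim_inl, Sum.elim_inr] <;>
    split_ifs <;> simp

theorem maximalClusters_le_elim (X : ι → Multiset α) (Y : κ → Multiset α) (k : ι ⊕ κ) :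
    maximalClusters X Y k ≤ Sum.elim X Y k :=
  (maximalClusters_eq_zero_or X Y k).elim (fun h0 => h0 ▸ Multiset.zero_le _) le_of_eq

end MaximalClusters

open Function

namespace ClusteringRule

variable {r d : ℕ → ℝ}

theorem r_mono (h : ClusteringRule r d) {a b : ℕ} (ha : 1 ≤ a) (hab : a ≤ b) : r a ≤ r b :=
  monotoneOn_nat_Ici_of_le_succ (fun k hk => (h.2.2.1 k hk).le) ha (ha.trans hab) hab

theorem r_pos (h : ClusteringRule r d) {k : ℕ} (hk : 1 ≤ k) : 0 < r k :=
  h.1.trans_le (h.r_mono le_rfl hk)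

theorem d_add_r_pred_lt (h : ClusteringRule r d) {k : ℕ} (hk : 2 ≤ k) : d k + r (k - 1) < r k :=
  h.2.2.2.2.1 k hk

theorem six_mul_r_pred_lt_d (h : ClusteringRule r d) {k : ℕ} (hk : 2 ≤ k) :
    6 * r (k - 1) < d k :=
  h.2.2.2.2.2 k hk

end ClusteringRule

section

variable {M : Type*} [MetricSpace M] {r d : ℕ → ℝ}

def Confined (r : ℕ → ℝ) (x : Multiset M) (c : M) : Prop :=
  ∀ q ∈ x, dist q c < r (Multiset.card x)

def Separated (d : ℕ → ℝ) (x : Multiset M) (c : M) (y : Multiset M) (c' : M) : Prop :=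
  d (Multiset.card x + Multiset.card y) < dist c c'

structure IsClusterDecomposition (r d : ℕ → ℝ) (z : Multiset M) {ι : Type*} [Fintype ι]
    (W : ι → Multiset M) (c : ι → M) : Prop where
  sum_eq : ∑ i, W i = z
  ne_zero : ∀ i, W i ≠ 0
  confined : ∀ i, Confined r (W i) (c i)
  separated : Pairwise fun i j => Separated d (W i) (c i) (W j) (c j)

theorem confined_zero (c : M) : Confined r 0 c := by
  simp [Confined]

theorem Confined.add_of_not_separated (h : ClusteringRule r d) {x y : Multiset M} {c c' : M}
    (hx : Confined r x c) (hy : Confined r y c') (hxy : ¬Separated d x c y c') (hx0 : x ≠ 0) :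
    Confined r (x + y) c := by
  have hx1 : 1 ≤ x.card := Multiset.card_pos.2 hx0
  rw [Separated, not_lt] at hxy
  intro q hq
  rw [Multiset.card_add]
  rcases Multiset.mem_add.1 hq with hq | hq
  · exact (hx q hq).trans_le (h.r_mono hx1 (by omega))
  · have hy1 : 1 ≤ y.card := Multiset.card_pos_iff_exists_mem.2 ⟨q, hq⟩
    have hry := h.r_mono hy1 (show y.card ≤ x.card + y.card - 1 by omega)
    have hrule := h.d_add_r_pred_lt (show 2 ≤ x.card + y.card by omega)
    calc dist q c ≤ dist q c' + dist c c' := dist_triangle_right _ _ _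
      _ < r (x.card + y.card) := by linarith [hy q hq]

theorem confined_mergePieces {ι : Type*} [DecidableEq ι] (h : ClusteringRule r d)
    {W : ι → Multiset M} {c : ι → M} (hW : ∀ k, Confined r (W k) (c k)) {i j : ι} (hij : i ≠ j)
    (hi : W i ≠ 0) (hns : ¬Separated d (W i) (c i) (W j) (c j)) (k : ι) :
    Confined r (mergePieces W i j k) (c k) := by
  by_cases hkj : k = j
  · rw [hkj, mergePieces_right]
    exact confined_zero _
  by_cases hki : k = i
  · rw [hki, mergePieces_left hij]
    exact (hW i).add_of_not_separated h (hW j) hns hi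
  · rw [mergePieces_of_ne hki hkj]
    exact hW k

/-- Otherwise the centres of `y` and `y'` would be within `4 r (n - 1)` of each other, `n` being
their total size, while separation puts them more than `d n > 6 r (n - 1)` apart. -/
theorem Separated.disjoint_of_mem (h : ClusteringRule r d) {x y y' : Multiset M} {c b b' : M}
    (hsep : Separated d y b y' b') (hy : Confined r y b) (hy' : Confined r y' b')
    (hx : Confined r x c) (hcard : x.card ≤ y.card) {p : M} (hpx : p ∈ x) (hpy : p ∈ y) :
    Disjoint x y' := by
  refine Multiset.disjoint_left.2 fun {q} hqx hqy' => ?_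
  have hx1 : 1 ≤ x.card := Multiset.card_pos_iff_exists_mem.2 ⟨p, hpx⟩
  have hy'1 : 1 ≤ y'.card := Multiset.card_pos_iff_exists_mem.2 ⟨q, hqy'⟩
  set n := y.card + y'.card
  have hrx := h.r_mono hx1 (show x.card ≤ n - 1 by omega)
  have hry := h.r_mono (hx1.trans hcard) (show y.card ≤ n - 1 by omega)
  have hry' := h.r_mono hy'1 (show y'.card ≤ n - 1 by omega)
  have hrpos := h.r_pos (show 1 ≤ n - 1 by omega)
  have hrule := h.six_mul_r_pred_lt_d (show 2 ≤ n by omega)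
  have hbb' : dist b b' < 4 * r (n - 1) :=
    calc dist b b' ≤ dist p b + (dist p c + dist q c) + dist q b' := by
          linarith [dist_triangle4 b p q b', dist_triangle_right p q c, dist_comm b p]
      _ < 4 * r (n - 1) := by linarith [hy p hpy, hx p hpx, hx q hqx, hy' q hqy']
  rw [Separated] at hsep
  linarith

theorem Separated.disjoint (h : ClusteringRule r d) {y y' : Multiset M} {b b' : M}
    (hsep : Separated d y b y' b') (hy : Confined r y b) (hy' : Confined r y' b') :
    Disjoint y y' :=
  Multiset.disjoint_left.2 fun hp =>
    Multiset.disjoint_left.1 (hsep.disjoint_of_mem h hy hy' hy le_rfl hp hp) hp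

namespace IsClusterDecomposition

variable {ι κ : Type*} [Fintype ι] [Fintype κ] {z : Multiset M} {W X : ι → Multiset M}
  {c cX : ι → M} {Y : κ → Multiset M} {cY : κ → M}

theorem le (hW : IsClusterDecomposition r d z W c) (i : ι) : W i ≤ z :=
  hW.sum_eq ▸ Finset.single_le_sum_of_canonicallyOrdered (Finset.mem_univ i)

theorem pairwise_disjoint (h : ClusteringRule r d) (hW : IsClusterDecomposition r d z W c) :
    Pairwise (Disjoint on W) :=
  fun _ _ hij => (hW.separated hij).disjoint h (hW.confined _) (hW.confined _)

theorem eq_of_le (h : ClusteringRule r d) (hW : IsClusterDecomposition r d z W c) {i j : ι}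
    (hij : W i ≤ W j) : i = j := by
  by_contra hne
  exact hW.ne_zero i ((hW.pairwise_disjoint h hne).eq_bot_of_le hij)

theorem le_of_mem (h : ClusteringRule r d) (hW : IsClusterDecomposition r d z W c)
    {x : Multiset M} {c₀ : M} (hx : Confined r x c₀) (hxz : x ≤ z) {k : ι} {p : M}
    (hpx : p ∈ x) (hpW : p ∈ W k) (hcard : x.card ≤ (W k).card) : x ≤ W k := by
  classical
  have hrest : Disjoint x (∑ j ∈ Finset.univ.erase k, W j) :=
    Multiset.disjoint_finsetSum_right.2 fun j hj =>
      (hW.separated (Finset.ne_of_mem_erase hj).symm).disjoint_of_mem h (hW.confined k)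
        (hW.confined j) hx hcard hpx hpW
  rw [← hW.sum_eq, ← Finset.add_sum_erase _ _ (Finset.mem_univ k)] at hxz
  exact Multiset.le_of_le_add_of_disjoint hxz hrest

theorem le_or_le_or_disjoint (h : ClusteringRule r d) (hX : IsClusterDecomposition r d z X cX)
    (hY : IsClusterDecomposition r d z Y cY) (i : ι) (j : κ) :
    X i ≤ Y j ∨ Y j ≤ X i ∨ Disjoint (X i) (Y j) := by
  by_cases hdisj : Disjoint (X i) (Y j)
  · exact Or.inr (Or.inr hdisj)
  obtain ⟨p, hpX, hpY⟩ : ∃ p, p ∈ X i ∧ p ∈ Y j := by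
    simpa [Multiset.disjoint_left] using hdisj
  rcases le_total (X i).card (Y j).card with hcard | hcard
  · exact Or.inl (hY.le_of_mem h (hX.confined i) (hX.le i) hpX hpY hcard)
  · exact Or.inr (Or.inl (hX.le_of_mem h (hY.confined j) (hY.le j) hpY hpX hcard))

end IsClusterDecomposition

section Merging

variable {ι : Type*} [Fintype ι]

theorem exists_clusterDecomposition_of_separated (W : ι → Multiset M) (c : ι → M)
    (hW : ∀ i, Confined r (W i) (c i))
    (hsep : ∀ i j, i ≠ j → W i ≠ 0 → W j ≠ 0 → Separated d (W i) (c i) (W j) (c j)) :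
    ∃ (p : ℕ) (V : Fin p → Multiset M) (b : Fin p → M),
      IsClusterDecomposition r d (∑ i, W i) V b ∧ ∀ i, W i ≠ 0 → ∃ k, W i ≤ V k := by
  classical
  let e := Fintype.equivFin {i // W i ≠ 0}
  refine ⟨_, fun k => W (e.symm k), fun k => c (e.symm k),
    ⟨?_, fun k => (e.symm k).2, fun k => hW _, fun k k' hkk' => ?_⟩,
    fun i hi => ⟨e ⟨i, hi⟩, by simp⟩⟩
  · rw [e.symm.sum_comp (fun i => W i),
      ← Finset.sum_subtype (Finset.univ.filter fun i => W i ≠ 0) (by simp),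
      Finset.sum_filter_ne_zero]
  · exact hsep _ _ (fun heq => hkk' (e.symm.injective (Subtype.ext heq))) (e.symm k).2
      (e.symm k').2

theorem exists_clusterDecomposition_of_confined (h : ClusteringRule r d) (W : ι → Multiset M)
    (c : ι → M) (hW : ∀ i, Confined r (W i) (c i)) :
    ∃ (p : ℕ) (V : Fin p → Multiset M) (b : Fin p → M),
      IsClusterDecomposition r d (∑ i, W i) V b ∧ ∀ i, W i ≠ 0 → ∃ k, W i ≤ V k := by
  classical
  induction hn : (Finset.univ.filter fun i => W i ≠ 0).card using Nat.strong_induction_on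
    generalizing W with
  | _ n ih =>
  by_cases hsep : ∀ i j, i ≠ j → W i ≠ 0 → W j ≠ 0 → Separated d (W i) (c i) (W j) (c j)
  · exact exists_clusterDecomposition_of_separated W c hW hsep
  push Not at hsep
  obtain ⟨i, j, hij, hi, hj, hns⟩ := hsep
  obtain ⟨p, V, b, hV, hWV⟩ := ih _ (hn ▸ card_mergePieces_ne_zero_lt hi hj)
    (mergePieces W i j) (confined_mergePieces h hW hij hi hns) rfl
  refine ⟨p, V, b, sum_mergePieces hij ▸ hV, fun k hk => ?_⟩
  obtain ⟨k', hk'⟩ := exists_le_mergePieces hij k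
  obtain ⟨k'', hk''⟩ := hWV k' fun h0 => hk (Multiset.le_zero.1 (h0 ▸ hk'))
  exact ⟨k'', hk'.trans hk''⟩

end Merging

section CommonCoarsening

variable {ι κ : Type*} [Fintype ι] [Fintype κ] {z : Multiset M} {X : ι → Multiset M}
  {cX : ι → M} {Y : κ → Multiset M} {cY : κ → M}

theorem confined_maximalClusters (hX : IsClusterDecomposition r d z X cX)
    (hY : IsClusterDecomposition r d z Y cY) (k : ι ⊕ κ) :
    Confined r (maximalClusters X Y k) (Sum.elim cX cY k) := by
  rcases maximalClusters_eq_zero_or X Y k with h0 | heq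
  · exact h0 ▸ confined_zero _
  · rcases k with i | j
    · exact heq ▸ hX.confined i
    · exact heq ▸ hY.confined j

theorem maximalClusters_le (hX : IsClusterDecomposition r d z X cX)
    (hY : IsClusterDecomposition r d z Y cY) (k : ι ⊕ κ) : maximalClusters X Y k ≤ z := by
  refine (maximalClusters_le_elim X Y k).trans ?_
  rcases k with i | j
  · exact hX.le i
  · exact hY.le j

theorem exists_le_maximalClusters_left (h : ClusteringRule r d)
    (hX : IsClusterDecomposition r d z X cX) (Y : κ → Multiset M) (i : ι) :
    ∃ k, X i ≤ maximalClusters X Y k := by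
  by_cases hXY : ∃ j, X i < Y j
  · obtain ⟨j, hlt⟩ := hXY
    have hYX : ¬∃ i', Y j ≤ X i' := fun ⟨i', hle⟩ =>
      (hX.eq_of_le h (hlt.le.trans hle) ▸ hlt.trans_le hle).false
    exact ⟨.inr j, by simpa [maximalClusters, hYX] using hlt.le⟩
  · exact ⟨.inl i, by simp [maximalClusters, hXY]⟩

theorem exists_le_maximalClusters_right (h : ClusteringRule r d) (X : ι → Multiset M)
    (hY : IsClusterDecomposition r d z Y cY) (j : κ) :
    ∃ k, Y j ≤ maximalClusters X Y k := by
  by_cases hYX : ∃ i, Y j ≤ X i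
  · obtain ⟨i, hle⟩ := hYX
    have hXY : ¬∃ j', X i < Y j' := fun ⟨j', hlt⟩ =>
      (hY.eq_of_le h (hle.trans hlt.le) ▸ hle.trans_lt hlt).false
    exact ⟨.inl i, by simpa [maximalClusters, hXY] using hle⟩
  · exact ⟨.inr j, by simp [maximalClusters, hYX]⟩

theorem disjoint_maximalClusters_inl_inr (h : ClusteringRule r d)
    (hX : IsClusterDecomposition r d z X cX) (hY : IsClusterDecomposition r d z Y cY)
    (i : ι) (j : κ) : Disjoint (maximalClusters X Y (.inl i)) (maximalClusters X Y (.inr j)) := by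
  simp only [maximalClusters, Sum.elim_inl, Sum.elim_inr]
  by_cases hXY : ∃ j, X i < Y j
  · simp [hXY]
  by_cases hYX : ∃ i, Y j ≤ X i
  · simp only [hYX, if_true]
    exact disjoint_bot_right
  simp only [hXY, hYX, if_false]
  rcases hX.le_or_le_or_disjoint h hY i j with hle | hle | hdisj
  · rcases hle.lt_or_eq with hlt | heq
    · exact absurd ⟨j, hlt⟩ hXY
    · exact absurd ⟨i, heq.ge⟩ hYX
  · exact absurd ⟨i, hle⟩ hYX
  · exact hdisj

theorem pairwise_disjoint_maximalClusters (h : ClusteringRule r d)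
    (hX : IsClusterDecomposition r d z X cX) (hY : IsClusterDecomposition r d z Y cY) :
    Pairwise (Disjoint on maximalClusters X Y) := by
  have hle := maximalClusters_le_elim X Y
  rintro (i | j) (i' | j') hne
  · exact (hX.pairwise_disjoint h (hne ∘ congrArg _)).mono (hle _) (hle _)
  · exact disjoint_maximalClusters_inl_inr h hX hY i j'
  · exact (disjoint_maximalClusters_inl_inr h hX hY i' j).symm
  · exact (hY.pairwise_disjoint h (hne ∘ congrArg _)).mono (hle _) (hle _)

/-- The maximal clusters are disjoint, so their sum is their union, which is `z` because every
cluster of `X` lies in one of them. -/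
theorem sum_maximalClusters (h : ClusteringRule r d) (hX : IsClusterDecomposition r d z X cX)
    (hY : IsClusterDecomposition r d z Y cY) : ∑ k, maximalClusters X Y k = z := by
  classical
  have hXz : z = Finset.univ.sup X :=
    hX.sum_eq ▸ Multiset.finsetSum_eq_sup ((hX.pairwise_disjoint h).set_pairwise _)
  rw [Multiset.finsetSum_eq_sup ((pairwise_disjoint_maximalClusters h hX hY).set_pairwise _)]
  refine le_antisymm (Finset.sup_le fun k _ => maximalClusters_le hX hY k) ?_
  rw [hXz]
  refine Finset.sup_le fun i _ => ?_
  obtain ⟨k, hk⟩ := exists_le_maximalClusters_left h hX Y i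
  exact hk.trans (Finset.le_sup (Finset.mem_univ k))

end CommonCoarsening

theorem IsClusterDecomposition.exists_common_coarsening {ι κ : Type*} [Fintype ι] [Fintype κ]
    {z : Multiset M} {X : ι → Multiset M} {cX : ι → M} {Y : κ → Multiset M} {cY : κ → M}
    (h : ClusteringRule r d) (hX : IsClusterDecomposition r d z X cX)
    (hY : IsClusterDecomposition r d z Y cY) :
    ∃ (p : ℕ) (W : Fin p → Multiset M) (c : Fin p → M), IsClusterDecomposition r d z W c ∧
      (∀ i, ∃ k, X i ≤ W k) ∧ ∀ j, ∃ k, Y j ≤ W k := by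
  obtain ⟨p, W, c, hW, hcoarse⟩ := exists_clusterDecomposition_of_confined h
    (maximalClusters X Y) (Sum.elim cX cY) (confined_maximalClusters hX hY)
  have hcoarse' : ∀ x ≠ 0, ∀ k, x ≤ maximalClusters X Y k → ∃ k', x ≤ W k' :=
    fun x hx k hk => (hcoarse k fun h0 => hx (Multiset.le_zero.1 (h0 ▸ hk))).imp
      fun _ => hk.trans
  refine ⟨p, W, c, sum_maximalClusters h hX hY ▸ hW, fun i => ?_, fun j => ?_⟩
  · obtain ⟨k, hk⟩ := exists_le_maximalClusters_left h hX Y i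
    exact hcoarse' _ (hX.ne_zero i) k hk
  · obtain ⟨k, hk⟩ := exists_le_maximalClusters_right h X hY j
    exact hcoarse' _ (hY.ne_zero j) k hk

end

/-- Common coarsening: given two cluster decompositions `z = Σ X i = Σ Y j`, there is a
cluster decomposition `z = Σ W k` such that every `X i` and every `Y j` is contained in
some `W k`. -/
theorem cluster_decompositions_common_coarsening {M : Type*} [MetricSpace M]
    (r d : ℕ → ℝ) (hrule : ClusteringRule r d) (z : Multiset M)
    (m : ℕ) (X : Fin m → Multiset M) (cX : Fin m → M)
    (hXsum : (∑ i, X i) = z) (hXne : ∀ i, X i ≠ 0)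
    (hXconf : ∀ i, ∀ p ∈ X i, dist p (cX i) < r (X i).card)
    (hXsep : ∀ i j, i ≠ j → d ((X i).card + (X j).card) < dist (cX i) (cX j))
    (l : ℕ) (Y : Fin l → Multiset M) (cY : Fin l → M)
    (hYsum : (∑ j, Y j) = z) (hYne : ∀ j, Y j ≠ 0)
    (hYconf : ∀ j, ∀ p ∈ Y j, dist p (cY j) < r (Y j).card)
    (hYsep : ∀ i j, i ≠ j → d ((Y i).card + (Y j).card) < dist (cY i) (cY j)) :
    ∃ (p : ℕ) (W : Fin p → Multiset M) (cW : Fin p → M),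
      (∀ k, W k ≠ 0) ∧ (∑ k, W k) = z ∧
      (∀ k, ∀ q ∈ W k, dist q (cW k) < r (W k).card) ∧
      (∀ k k', k ≠ k' → d ((W k).card + (W k').card) < dist (cW k) (cW k')) ∧
      (∀ i, ∃ k, X i ≤ W k) ∧ (∀ j, ∃ k, Y j ≤ W k) := by
  obtain ⟨p, W, c, hW, hXW, hYW⟩ := IsClusterDecomposition.exists_common_coarsening hrule
    ⟨hXsum, hXne, hXconf, fun i j => hXsep i j⟩ ⟨hYsum, hYne, hYconf, fun i j => hYsep i j⟩
  exact ⟨p, W, c, hW.ne_zero, hW.sum_eq, hW.confined, fun k k' => @hW.separated k k', hXW, hYW⟩
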